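/- Let H be a hyperbolic group with finite generating set A and word metric d_A, and let φ : H → H be an endomorphism that is a quasi-isometric embedding of (H, d_A) into itself, i.e., there exist λ ≥ 1 and k ≥ 0 with λ⁻¹ d_A(x,y) − k ≤ d_A(φ(x), φ(y)) ≤ λ d_A(x,y) + k for all x, y ∈ H. Then the BRP holds for φ: for every p ≥ 0 there exists q ≥ 0 such that for all u, v ∈ H, (u|v) ≤ p implies (φ(u)|φ(v)) ≤ q. -/

import Mathlib

/-!
A quasi-isometric embedding `φ` maps a geodesic `[u, v]` to a quasi-geodesic chain from `φ u` to
`φ v`, and in a hyperbolic group such a chain is uniformly close to every geodesic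
`[φ u, φ v]` (Morse lemma). By thin triangles some point `α t` of `[u, v]` is within
`(u|v) + 2δ + 1` of `1`, so `φ (α t)` is within `λ ((u|v) + 2δ + 1) + k` of `1`, and so is,
up to a constant, a point of `[φ u, φ v]`; finally `(φ u|φ v)` is at most the distance from `1`
to any point of `[φ u, φ v]`.

The Morse lemma is proved as in Bridson–Haefliger III.H.1.7. By bisection, a geodesic between
two points of a `σ`-chain that are at most `2 ^ K` steps apart stays within `δ K + σ` of the
chain. If `D` is the largest distance from a geodesic to the quasi-geodesic chain, attained at
`g i₀`, compare `g i₀` with a detour that leaves the geodesic `2D` before `g i₀`, follows the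
chain for `O(D)` steps and rejoins the geodesic `2D` after it: the detour stays `D` away from
`g i₀`, hence `D ≤ δ log₂ O(D) + 2δ + σ`, which bounds `D`.
-/

namespace Paper

variable {H : Type*} [Group H]

/-- `g` can be written as a product of `n` elements of `A ∪ A⁻¹`. -/
def WordWitness (A : Set H) (g : H) (n : ℕ) : Prop :=
  ∃ l : List H, l.length = n ∧ (∀ x ∈ l, x ∈ A ∨ x⁻¹ ∈ A) ∧ l.prod = g

/-- The word metric on `H` with respect to the generating set `A`. -/
noncomputable def wd (A : Set H) (g h : H) : ℕ :=
  sInf {n | WordWitness A (g⁻¹ * h) n}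

/-- The Gromov product `(u|v)_w` with respect to the word metric for `A`. -/
noncomputable def gp (A : Set H) (w u v : H) : ℝ :=
  ((wd A w u : ℝ) + (wd A w v : ℝ) - (wd A u v : ℝ)) / 2

/-- A discrete geodesic `γ : {0,…,n} → H` from `x` to `y` for the word metric of `A`. -/
def IsDiscreteGeodesic (A : Set H) (n : ℕ) (γ : ℕ → H) (x y : H) : Prop :=
  γ 0 = x ∧ γ n = y ∧
    ∀ i, i ≤ n → ∀ j, j ≤ n → (wd A (γ i) (γ j) : ℤ) = |(i : ℤ) - (j : ℤ)|

/-- `H` is hyperbolic with respect to `A`: some `δ ≥ 0` satisfies the Rips thin-triangles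
condition for discrete geodesics (all three sides are covered since `x, y, z` and the three
geodesics are universally quantified, and hence may be cyclically permuted). -/
def IsHyperbolic (A : Set H) : Prop :=
  ∃ δ : ℝ, 0 ≤ δ ∧ ∀ x y z : H, ∀ n₁ n₂ n₃ : ℕ, ∀ α β γ : ℕ → H,
    IsDiscreteGeodesic A n₁ α x y → IsDiscreteGeodesic A n₂ β y z →
    IsDiscreteGeodesic A n₃ γ z x → ∀ i, i ≤ n₁ →
      ∃ j, (j ≤ n₂ ∧ (wd A (α i) (β j) : ℝ) ≤ δ) ∨
           (j ≤ n₃ ∧ (wd A (α i) (γ j) : ℝ) ≤ δ)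

/-- The bounded reduction property for `φ`, in its Gromov-product formulation:
for every `p ≥ 0` there is `q ≥ 0` such that `(u|v) ≤ p` implies `(φ(u)|φ(v)) ≤ q`. -/
def BRP (A : Set H) (φ : H →* H) : Prop :=
  ∀ p : ℝ, 0 ≤ p → ∃ q : ℝ, 0 ≤ q ∧
    ∀ u v : H, gp A 1 u v ≤ p → gp A 1 (φ u) (φ v) ≤ q

lemma exists_adjacent_of_forall_or (p q : ℕ → Prop) {N : ℕ} (h₀ : p 0) (hN : q N)
    (h : ∀ i ≤ N, p i ∨ q i) : ∃ i j, i ≤ j ∧ j ≤ i + 1 ∧ j ≤ N ∧ p i ∧ q j := by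
  induction N with
  | zero => exact ⟨0, 0, le_rfl, by omega, le_rfl, h₀, hN⟩
  | succ N ih =>
    by_cases hqN : q N
    · obtain ⟨i, j, h₁, h₂, h₃, h₄, h₅⟩ := ih hqN fun i hi => h i (by omega)
      exact ⟨i, j, h₁, h₂, by omega, h₄, h₅⟩
    · exact ⟨N, N + 1, by omega, le_rfl, le_rfl, (h N (by omega)).resolve_right hqN, hN⟩

open Filter Asymptotics in
lemma exists_le_of_le_mul_clog {δ a b c : ℝ} (hδ : 0 ≤ δ) (hb : 0 ≤ b) :
    ∃ D₀ : ℕ, ∀ D : ℕ, (D : ℝ) ≤ δ * Nat.clog 2 ⌊b * D + c⌋₊ + a → D ≤ D₀ := by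
  have hlin : (fun K : ℕ => b * δ * K + (b * a + c)) =o[atTop] (fun K => (2 : ℝ) ^ K) :=
    ((isLittleO_coe_const_pow_of_one_lt one_lt_two).const_mul_left (b * δ)).add
      (isLittleO_const_left.2 (Or.inr (tendsto_norm_atTop_atTop.comp
        (tendsto_pow_atTop_atTop_of_one_lt one_lt_two))))
  obtain ⟨M, hM⟩ := eventually_atTop.1 (hlin.def (by norm_num : (0 : ℝ) < 1 / 2))
  refine ⟨⌈δ * M + a⌉₊, fun D hD => ?_⟩
  set K := Nat.clog 2 ⌊b * D + c⌋₊
  -- `2 ^ (K - 1) < b D + c ≤ b (δ K + a) + c` fails once `K ≥ M`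
  have hKM : K ≤ M := by
    by_contra! h
    have h1 : ((2 ^ (K - 1) : ℕ) : ℝ) < b * D + c :=
      Nat.lt_of_lt_floor (Nat.pow_lt_of_lt_clog (by omega))
    have h2 := (le_abs_self _).trans (hM K h.le)
    rw [Real.norm_eq_abs, abs_of_pos (by positivity)] at h2
    have h3 : (2 : ℝ) ^ K = 2 * 2 ^ (K - 1) := by rw [← pow_succ']; congr 1; omega
    push_cast at h1
    nlinarith
  have : (K : ℝ) ≤ M := by exact_mod_cast hKM
  exact_mod_cast (show (D : ℝ) ≤ ⌈δ * M + a⌉₊ by nlinarith [Nat.le_ceil (δ * M + a)])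

section WordMetric

variable {A : Set H}

lemma WordWitness.inv {g : H} {n : ℕ} (h : WordWitness A g n) : WordWitness A g⁻¹ n := by
  obtain ⟨l, rfl, hl, rfl⟩ := h
  refine ⟨(l.map (·⁻¹)).reverse, by simp, ?_, (List.prod_inv_reverse l).symm⟩
  simp only [List.mem_reverse, List.mem_map]
  rintro _ ⟨x, hx, rfl⟩
  simpa [or_comm] using hl x hx

lemma WordWitness.mul {g g' : H} {n n' : ℕ} (h : WordWitness A g n) (h' : WordWitness A g' n') :
    WordWitness A (g * g') (n + n') := by
  obtain ⟨l, rfl, hl, rfl⟩ := h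
  obtain ⟨l', rfl, hl', rfl⟩ := h'
  exact ⟨l ++ l', List.length_append, List.forall_mem_append.2 ⟨hl, hl'⟩, List.prod_append⟩

lemma exists_wordWitness (hgen : Subgroup.closure A = ⊤) (g : H) : ∃ n, WordWitness A g n := by
  have hg : g ∈ (Subgroup.closure A).toSubmonoid := by rw [hgen]; trivial
  rw [Subgroup.closure_toSubmonoid] at hg
  obtain ⟨l, hl, rfl⟩ := Submonoid.exists_list_of_mem_closure hg
  exact ⟨l.length, l, rfl, fun x hx => by simpa using hl x hx, rfl⟩

lemma wordWitness_wd (hgen : Subgroup.closure A = ⊤) (x y : H) :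
    WordWitness A (x⁻¹ * y) (wd A x y) :=
  Nat.sInf_mem (exists_wordWitness hgen _)

lemma wd_le_of_wordWitness {x y : H} {n : ℕ} (h : WordWitness A (x⁻¹ * y) n) : wd A x y ≤ n :=
  Nat.sInf_le h

@[simp]
lemma wd_self (x : H) : wd A x x = 0 :=
  Nat.le_zero.1 (wd_le_of_wordWitness ⟨[], rfl, by simp, by simp⟩)

lemma wd_comm (hgen : Subgroup.closure A = ⊤) (x y : H) : wd A x y = wd A y x := by
  have key (a b : H) : wd A a b ≤ wd A b a :=
    wd_le_of_wordWitness (by simpa using (wordWitness_wd hgen b a).inv)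
  exact (key x y).antisymm (key y x)

lemma wd_triangle (hgen : Subgroup.closure A = ⊤) (x y z : H) :
    wd A x z ≤ wd A x y + wd A y z :=
  wd_le_of_wordWitness <| by
    simpa [mul_assoc] using (wordWitness_wd hgen x y).mul (wordWitness_wd hgen y z)

end WordMetric

def IsChain (A : Set H) (σ : ℝ) (n : ℕ) (c : ℕ → H) : Prop :=
  ∀ i < n, (wd A (c i) (c (i + 1)) : ℝ) ≤ σ

def IsQuasiGeodesicChain (A : Set H) (σ lam k : ℝ) (n : ℕ) (c : ℕ → H) : Prop :=
  IsChain A σ n c ∧ ∀ s ≤ n, ∀ t ≤ n, (s : ℝ) - t ≤ lam * (wd A (c s) (c t) + k)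

section Geodesics

variable {A : Set H} {σ : ℝ} {n : ℕ} {c γ : ℕ → H} {x y : H}

lemma IsChain.wd_le (hgen : Subgroup.closure A = ⊤) (hc : IsChain A σ n c) {i j : ℕ}
    (hij : i ≤ j) (hjn : j ≤ n) : (wd A (c i) (c j) : ℝ) ≤ σ * (j - i) := by
  induction j, hij using Nat.le_induction with
  | base => simp
  | succ j hij ih =>
    have : (wd A (c i) (c (j + 1)) : ℝ) ≤ wd A (c i) (c j) + wd A (c j) (c (j + 1)) := by
      exact_mod_cast wd_triangle hgen _ _ _
    have := hc j hjn
    have := ih (by omega)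
    push_cast
    linarith

lemma isDiscreteGeodesic_of_wd_eq (hgen : Subgroup.closure A = ⊤) (h0 : γ 0 = x) (hn : γ n = y)
    (h : ∀ i j, i ≤ j → j ≤ n → wd A (γ i) (γ j) = j - i) : IsDiscreteGeodesic A n γ x y := by
  refine ⟨h0, hn, fun i hi j hj => ?_⟩
  rcases le_total i j with hij | hji
  · rw [h i j hij hj, abs_of_nonpos (by omega)]
    omega
  · rw [wd_comm hgen, h j i hji hi, abs_of_nonneg (by omega)]
    omega

namespace IsDiscreteGeodesic

lemma wd_eq (h : IsDiscreteGeodesic A n γ x y) {i j : ℕ} (hij : i ≤ j) (hj : j ≤ n) :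
    wd A (γ i) (γ j) = j - i := by
  have := h.2.2 i (hij.trans hj) j hj
  rw [abs_of_nonpos (by omega)] at this
  omega

lemma wd_left (h : IsDiscreteGeodesic A n γ x y) {i : ℕ} (hi : i ≤ n) : wd A x (γ i) = i := by
  simpa [h.1] using h.wd_eq (Nat.zero_le i) hi

lemma wd_right (h : IsDiscreteGeodesic A n γ x y) {i : ℕ} (hi : i ≤ n) :
    wd A (γ i) y = n - i := by
  simpa [h.2.1] using h.wd_eq hi le_rfl

lemma wd_endpoints (h : IsDiscreteGeodesic A n γ x y) : wd A x y = n := by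
  simpa [h.1, h.2.1] using h.wd_eq (Nat.zero_le n) le_rfl

lemma reverse (hgen : Subgroup.closure A = ⊤) (h : IsDiscreteGeodesic A n γ x y) :
    IsDiscreteGeodesic A n (fun i => γ (n - i)) y x := by
  refine isDiscreteGeodesic_of_wd_eq hgen (by simpa using h.2.1) (by simpa using h.1)
    fun i j hij hj => ?_
  rw [wd_comm hgen, h.wd_eq (by omega) (by omega)]
  omega

lemma restrict (h : IsDiscreteGeodesic A n γ x y) {a b : ℕ} (hab : a ≤ b) (hb : b ≤ n) :
    IsDiscreteGeodesic A (b - a) (fun i => γ (a + i)) (γ a) (γ b) := by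
  refine ⟨by simp, by simp [Nat.add_sub_cancel' hab], fun i hi j hj => ?_⟩
  rw [h.2.2 _ (by omega) _ (by omega)]
  push_cast
  ring_nf

end IsDiscreteGeodesic

lemma isDiscreteGeodesic_of_isChain (hgen : Subgroup.closure A = ⊤) (hc : IsChain A 1 n c)
    (h0 : c 0 = x) (hn : c n = y) (hxy : n ≤ wd A x y) : IsDiscreteGeodesic A n c x y := by
  have upper {i j : ℕ} (hij : i ≤ j) (hj : j ≤ n) : wd A (c i) (c j) ≤ j - i := by
    have := hc.wd_le hgen hij hj
    rw [one_mul, ← Nat.cast_sub hij] at this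
    exact_mod_cast this
  refine isDiscreteGeodesic_of_wd_eq hgen h0 hn fun i j hij hj => (upper hij hj).antisymm ?_
  have := wd_triangle hgen (c 0) (c i) (c n)
  have := wd_triangle hgen (c i) (c j) (c n)
  have := upper (Nat.zero_le i) (hij.trans hj)
  have := upper hj le_rfl
  subst h0 hn
  omega

lemma exists_isDiscreteGeodesic (hgen : Subgroup.closure A = ⊤) (x y : H) :
    ∃ γ : ℕ → H, IsDiscreteGeodesic A (wd A x y) γ x y := by
  obtain ⟨l, hl, hlA, hprod⟩ := wordWitness_wd hgen x y
  refine ⟨fun i => x * (l.take i).prod, isDiscreteGeodesic_of_isChain hgen (fun i hi => ?_)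
    (by simp) ?_ le_rfl⟩
  · have hstep : WordWitness A ((x * (l.take i).prod)⁻¹ * (x * (l.take (i + 1)).prod)) 1 :=
      ⟨[l[i]], rfl, by simpa using hlA _ (List.getElem_mem _), by
        simp [List.prod_take_succ l i (by omega), mul_assoc]⟩
    exact_mod_cast wd_le_of_wordWitness hstep
  · simp [← hl, hprod]

lemma gp_le_wd_of_isDiscreteGeodesic (hgen : Subgroup.closure A = ⊤)
    (h : IsDiscreteGeodesic A n γ x y) (w : H) {i : ℕ} (hi : i ≤ n) :
    gp A w x y ≤ wd A w (γ i) := by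
  have := wd_triangle hgen w (γ i) x
  have := wd_triangle hgen w (γ i) y
  have := wd_comm hgen (γ i) x
  have := h.wd_left hi
  have := h.wd_right hi
  have := h.wd_endpoints
  have key : wd A w x + wd A w y ≤ 2 * wd A w (γ i) + wd A x y := by omega
  have := (Nat.cast_le (α := ℝ)).2 key
  push_cast at this
  unfold gp
  linarith

lemma exists_connector_far (hgen : Subgroup.closure A = ⊤) {D : ℕ}
    (hfar : ∀ s ≤ n, D ≤ wd A x (c s)) (hnear : ∃ s ≤ n, wd A y (c s) ≤ D)
    (hxy : 2 * D ≤ wd A x y ∨ ∃ s ≤ n, y = c s) :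
    ∃ s ≤ n, wd A y (c s) ≤ D ∧
      ∀ {E : ℕ} {γ : ℕ → H}, IsDiscreteGeodesic A E γ y (c s) → ∀ j ≤ E, D ≤ wd A x (γ j) := by
  rcases hxy with hxy | ⟨s, hs, rfl⟩
  · obtain ⟨s, hs, hys⟩ := hnear
    refine ⟨s, hs, hys, fun {E γ} hγ j hj => ?_⟩
    have := wd_triangle hgen x (γ j) y
    have := wd_comm hgen (γ j) y
    have := hγ.wd_left hj
    have := hγ.wd_endpoints
    omega
  · refine ⟨s, hs, by simp, fun {E γ} hγ j hj => ?_⟩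
    have : j = 0 := by have := hγ.wd_endpoints; simp at this; omega
    rw [this, hγ.1]
    exact hfar s hs

lemma IsDiscreteGeodesic.isQuasiGeodesicChain_comp {φ : H → H} {lam k : ℝ} (hlam : 0 < lam)
    (hqie : ∀ x y : H,
      lam⁻¹ * (wd A x y : ℝ) - k ≤ (wd A (φ x) (φ y) : ℝ) ∧
      (wd A (φ x) (φ y) : ℝ) ≤ lam * (wd A x y : ℝ) + k)
    (h : IsDiscreteGeodesic A n γ x y) : IsQuasiGeodesicChain A (lam + k) lam k n (φ ∘ γ) := by
  refine ⟨fun i hi => ?_, fun s hs t ht => ?_⟩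
  · have := (hqie (γ i) (γ (i + 1))).2
    rw [h.wd_eq (Nat.le_add_right i 1) hi, Nat.add_sub_cancel_left] at this
    simpa using this
  · have hst : (s : ℝ) - t ≤ wd A (γ s) (γ t) := by
      have : (s : ℤ) - t ≤ wd A (γ s) (γ t) := (h.2.2 s hs t ht).symm ▸ le_abs_self _
      exact_mod_cast this
    calc (s : ℝ) - t ≤ lam * (lam⁻¹ * wd A (γ s) (γ t)) := by field_simp; exact hst
      _ ≤ lam * (wd A (φ (γ s)) (φ (γ t)) + k) := by gcongr; linarith [(hqie (γ s) (γ t)).1]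
lemma IsQuasiGeodesicChain.le_add_two_pow_clog {lam k : ℝ} (hlam : 0 ≤ lam)
    (hc : IsQuasiGeodesicChain A σ lam k n c) {s t : ℕ} (hs : s ≤ n) (ht : t ≤ n) {M : ℝ}
    (hst : (wd A (c s) (c t) : ℝ) ≤ M) : s ≤ t + 2 ^ Nat.clog 2 ⌊lam * (M + k)⌋₊ := by
  have : (s : ℝ) < t + ⌊lam * (M + k)⌋₊ + 1 := by
    nlinarith [hc.2 s hs t ht, Nat.lt_floor_add_one (lam * (M + k))]
  have : s < t + ⌊lam * (M + k)⌋₊ + 1 := by exact_mod_cast this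
  have := Nat.le_pow_clog one_lt_two ⌊lam * (M + k)⌋₊
  omega

end Geodesics

-- `IsHyperbolic A` unfolds to `∃ δ, 0 ≤ δ ∧ RipsCondition A δ`.
def RipsCondition (A : Set H) (δ : ℝ) : Prop :=
  ∀ x y z : H, ∀ n₁ n₂ n₃ : ℕ, ∀ α β γ : ℕ → H,
    IsDiscreteGeodesic A n₁ α x y → IsDiscreteGeodesic A n₂ β y z →
    IsDiscreteGeodesic A n₃ γ z x → ∀ i, i ≤ n₁ →
      ∃ j, (j ≤ n₂ ∧ (wd A (α i) (β j) : ℝ) ≤ δ) ∨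
           (j ≤ n₃ ∧ (wd A (α i) (γ j) : ℝ) ≤ δ)

namespace RipsCondition

variable {A : Set H} {δ : ℝ} {x y z : H} {n n₁ n₂ n₃ : ℕ} {α β₁ β₂ β₃ : ℕ → H}

lemma exists_near (hr : RipsCondition A δ) (hgen : Subgroup.closure A = ⊤)
    (hα : IsDiscreteGeodesic A n α x y) (h₁ : IsDiscreteGeodesic A n₁ β₁ x z)
    (h₂ : IsDiscreteGeodesic A n₂ β₂ z y) {i : ℕ} (hi : i ≤ n) :
    (∃ j ≤ n₁, (wd A (α i) (β₁ j) : ℝ) ≤ δ) ∨ (∃ j ≤ n₂, (wd A (α i) (β₂ j) : ℝ) ≤ δ) := by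
  obtain ⟨j, ⟨hj, hd⟩ | ⟨hj, hd⟩⟩ :=
    hr x y z n n₂ n₁ α _ _ hα (h₂.reverse hgen) (h₁.reverse hgen) i hi
  · exact Or.inr ⟨n₂ - j, by omega, hd⟩
  · exact Or.inl ⟨n₁ - j, by omega, hd⟩

lemma exists_near_of_quadrilateral (hr : RipsCondition A δ) (hgen : Subgroup.closure A = ⊤)
    (hδ : 0 ≤ δ) {w : H} (hα : IsDiscreteGeodesic A n α x y)
    (h₁ : IsDiscreteGeodesic A n₁ β₁ x z) (h₂ : IsDiscreteGeodesic A n₂ β₂ z w)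
    (h₃ : IsDiscreteGeodesic A n₃ β₃ w y) {i : ℕ} (hi : i ≤ n) :
    (∃ j ≤ n₁, (wd A (α i) (β₁ j) : ℝ) ≤ 2 * δ) ∨ (∃ j ≤ n₂, (wd A (α i) (β₂ j) : ℝ) ≤ 2 * δ) ∨
      (∃ j ≤ n₃, (wd A (α i) (β₃ j) : ℝ) ≤ 2 * δ) := by
  obtain ⟨θ, hθ⟩ := exists_isDiscreteGeodesic hgen z y
  rcases hr.exists_near hgen hα h₁ hθ hi with ⟨j, hj, hd⟩ | ⟨j, hj, hd⟩
  · exact Or.inl ⟨j, hj, by linarith⟩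
  have hdist (p : H) : (wd A (α i) p : ℝ) ≤ wd A (α i) (θ j) + wd A (θ j) p := by
    exact_mod_cast wd_triangle hgen _ _ _
  rcases hr.exists_near hgen hθ h₂ h₃ hj with ⟨j', hj', hd'⟩ | ⟨j', hj', hd'⟩
  · exact Or.inr (Or.inl ⟨j', hj', by linarith [hdist (β₂ j')]⟩)
  · exact Or.inr (Or.inr ⟨j', hj', by linarith [hdist (β₃ j')]⟩)

lemma exists_wd_le_gp (hr : RipsCondition A δ) (hgen : Subgroup.closure A = ⊤)
    (hα : IsDiscreteGeodesic A n α x y) (w : H) :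
    ∃ t ≤ n, (wd A w (α t) : ℝ) ≤ gp A w x y + 2 * δ + 1 := by
  obtain ⟨β, hβ⟩ := exists_isDiscreteGeodesic hgen x w
  obtain ⟨γ, hγ⟩ := exists_isDiscreteGeodesic hgen w y
  obtain rfl := hα.wd_endpoints
  have := wd_comm hgen w x
  have := wd_comm hgen y x
  have := wd_triangle hgen w x y
  have := wd_triangle hgen w y x
  -- `t` is the point of `α` at distance `(y|w)_x` from `x`, up to rounding
  set t := (wd A x y + wd A w x - wd A w y) / 2
  have htn : t ≤ wd A x y := by omega
  have hgp : (wd A w x : ℝ) - t ≤ gp A w x y + 1 ∧ (wd A w y : ℝ) - wd A x y + t ≤ gp A w x y := by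
    have h1 : wd A w x + wd A x y ≤ 2 * t + wd A w y + 1 := by omega
    have h2 : 2 * t + wd A w y ≤ wd A w x + wd A x y := by omega
    have h1' := (Nat.cast_le (α := ℝ)).2 h1
    have h2' := (Nat.cast_le (α := ℝ)).2 h2
    push_cast at h1' h2'
    unfold gp
    constructor <;> linarith
  refine ⟨t, htn, ?_⟩
  have tri (p q r : H) : (wd A p r : ℝ) ≤ wd A p q + wd A q r := by
    exact_mod_cast wd_triangle hgen p q r
  have hxα : (wd A x (α t) : ℝ) = t := by exact_mod_cast hα.wd_left htn
  have hαy : (wd A (α t) y : ℝ) = wd A x y - t := by rw [hα.wd_right htn, Nat.cast_sub htn]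
  rcases hr.exists_near hgen hα hβ hγ htn with ⟨j, hj, hd⟩ | ⟨j, hj, hd⟩
  · have hxβ : (wd A x (β j) : ℝ) = j := by exact_mod_cast hβ.wd_left hj
    have hβw : (wd A w (β j) : ℝ) = wd A w x - j := by
      rw [wd_comm hgen w, hβ.wd_right hj, Nat.cast_sub hj, wd_comm hgen w x]
    have := tri w (β j) (α t)
    have := tri x (β j) (α t)
    rw [wd_comm hgen] at hd
    linarith
  · have hwγ : (wd A w (γ j) : ℝ) = j := by exact_mod_cast hγ.wd_left hj
    have hγy : (wd A (γ j) y : ℝ) = wd A w y - j := by rw [hγ.wd_right hj, Nat.cast_sub hj]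
    have := tri w (γ j) (α t)
    have := tri (α t) (γ j) y
    have : (wd A (γ j) (α t) : ℝ) ≤ δ := by rwa [wd_comm hgen]
    linarith

lemma exists_near_isChain (hr : RipsCondition A δ) (hgen : Subgroup.closure A = ⊤) {σ : ℝ}
    (hσ : 0 ≤ σ) {c : ℕ → H} (hc : IsChain A σ n c) (K : ℕ) {s t : ℕ} (hs : s ≤ n)
    (ht : t ≤ n) (hst : s ≤ t + 2 ^ K) (hts : t ≤ s + 2 ^ K) {N : ℕ} {g : ℕ → H}
    (hg : IsDiscreteGeodesic A N g (c s) (c t)) {i : ℕ} (hi : i ≤ N) :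
    ∃ j ≤ n, (wd A (g i) (c j) : ℝ) ≤ δ * K + σ := by
  induction K generalizing s t N g i with
  | zero =>
    rw [pow_zero] at hst hts
    have hN : (N : ℝ) ≤ σ := by
      rw [← hg.wd_endpoints]
      rcases le_total s t with h | h
      · have : (t : ℝ) ≤ s + 1 := by exact_mod_cast hts
        nlinarith [hc.wd_le hgen h ht]
      · have : (s : ℝ) ≤ t + 1 := by exact_mod_cast hst
        rw [wd_comm hgen]
        nlinarith [hc.wd_le hgen h hs]
    refine ⟨s, hs, ?_⟩
    rw [wd_comm hgen, hg.wd_left hi]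
    have : (i : ℝ) ≤ N := by exact_mod_cast hi
    push_cast
    linarith
  | succ K ih =>
    obtain ⟨β, hβ⟩ := exists_isDiscreteGeodesic hgen (c s) (c ((s + t) / 2))
    obtain ⟨γ, hγ⟩ := exists_isDiscreteGeodesic hgen (c ((s + t) / 2)) (c t)
    rw [pow_succ] at hst hts
    rcases hr.exists_near hgen hg hβ hγ hi with ⟨j', hj', hd⟩ | ⟨j', hj', hd⟩
    · obtain ⟨j, hj, hdj⟩ := ih hs (by omega) (by omega) (by omega) hβ hj'
      refine ⟨j, hj, ?_⟩
      have : (wd A (g i) (c j) : ℝ) ≤ wd A (g i) (β j') + wd A (β j') (c j) := by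
        exact_mod_cast wd_triangle hgen _ _ _
      push_cast
      linarith
    · obtain ⟨j, hj, hdj⟩ := ih (by omega) ht (by omega) (by omega) hγ hj'
      refine ⟨j, hj, ?_⟩
      have : (wd A (g i) (c j) : ℝ) ≤ wd A (g i) (γ j') + wd A (γ j') (c j) := by
        exact_mod_cast wd_triangle hgen _ _ _
      push_cast
      linarith

lemma le_mul_clog_of_farthest (hr : RipsCondition A δ) (hgen : Subgroup.closure A = ⊤)
    (hδ : 0 ≤ δ) {σ lam k : ℝ} (hσ : 0 ≤ σ) (hlam : 0 ≤ lam) {c g : ℕ → H} {N : ℕ}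
    (hc : IsQuasiGeodesicChain A σ lam k n c)
    (hg : IsDiscreteGeodesic A N g (c 0) (c n)) {D : ℕ}
    (hnear : ∀ i ≤ N, ∃ s ≤ n, wd A (g i) (c s) ≤ D) {i₀ : ℕ} (hi₀ : i₀ ≤ N)
    (hfar : ∀ s ≤ n, D ≤ wd A (g i₀) (c s)) :
    (D : ℝ) ≤ δ * Nat.clog 2 ⌊lam * (6 * D + k)⌋₊ + (2 * δ + σ) := by
  set K := Nat.clog 2 ⌊lam * (6 * D + k)⌋₊
  -- compare `g i₀` with the broken path `g ia → c sa → c sb → g ib`,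
  -- where `g ia` and `g ib` are `2D` away from `g i₀` or are the ends of `g`
  set ia := i₀ - 2 * D
  set ib := min N (i₀ + 2 * D)
  obtain ⟨sa, hsa, hEa, hfarA⟩ := exists_connector_far hgen hfar (hnear ia (by omega)) (by
    rcases le_or_gt (2 * D) i₀ with h | h
    · left
      rw [wd_comm hgen, hg.wd_eq (by omega) hi₀]
      omega
    · exact Or.inr ⟨0, Nat.zero_le n, by rw [show ia = 0 by omega, hg.1]⟩)
  obtain ⟨sb, hsb, hEb, hfarB⟩ := exists_connector_far hgen hfar (hnear ib (by omega)) (by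
    rcases le_or_gt (i₀ + 2 * D) N with h | h
    · left
      rw [hg.wd_eq (show i₀ ≤ ib by omega) (show ib ≤ N by omega)]
      omega
    · exact Or.inr ⟨n, le_rfl, by rw [show ib = N by omega, hg.2.1]⟩)
  have hab : wd A (c sa) (c sb) ≤ 6 * D := by
    have := wd_triangle hgen (c sa) (g ia) (c sb)
    have := wd_triangle hgen (g ia) (g ib) (c sb)
    have := hg.wd_eq (show ia ≤ ib by omega) (show ib ≤ N by omega)
    have := wd_comm hgen (c sa) (g ia)
    omega
  have hab' : (wd A (c sa) (c sb) : ℝ) ≤ 6 * D := by exact_mod_cast hab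
  have hba' : (wd A (c sb) (c sa) : ℝ) ≤ 6 * D := by rwa [wd_comm hgen]
  obtain ⟨βa, hβa⟩ := exists_isDiscreteGeodesic hgen (g ia) (c sa)
  obtain ⟨ζ, hζ⟩ := exists_isDiscreteGeodesic hgen (c sa) (c sb)
  obtain ⟨βb, hβb⟩ := exists_isDiscreteGeodesic hgen (g ib) (c sb)
  have hK : 0 ≤ δ * K := by positivity
  have hquad := hr.exists_near_of_quadrilateral hgen hδ
    (hg.restrict (show ia ≤ ib by omega) (show ib ≤ N by omega)) hβa hζ (hβb.reverse hgen)
    (i := i₀ - ia) (by omega)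
  simp only [show ia + (i₀ - ia) = i₀ by omega] at hquad
  rcases hquad with ⟨j, hj, hd⟩ | ⟨j, hj, hd⟩ | ⟨j, hj, hd⟩
  · have : (D : ℝ) ≤ wd A (g i₀) (βa j) := by exact_mod_cast hfarA hβa j hj
    linarith
  · obtain ⟨s, hs, hds⟩ := hr.exists_near_isChain hgen hσ hc.1 K hsa hsb
      (hc.le_add_two_pow_clog hlam hsa hsb hab') (hc.le_add_two_pow_clog hlam hsb hsa hba') hζ hj
    have : (wd A (g i₀) (c s) : ℝ) ≤ wd A (g i₀) (ζ j) + wd A (ζ j) (c s) := by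
      exact_mod_cast wd_triangle hgen _ _ _
    have : (D : ℝ) ≤ wd A (g i₀) (c s) := by exact_mod_cast hfar s hs
    linarith
  · have : (D : ℝ) ≤ wd A (g i₀) (βb (wd A (g ib) (c sb) - j)) := by
      exact_mod_cast hfarB hβb _ (Nat.sub_le _ _)
    linarith

lemma exists_near_quasiGeodesicChain (hr : RipsCondition A δ) (hgen : Subgroup.closure A = ⊤)
    (hδ : 0 ≤ δ) {σ lam k : ℝ} (hσ : 0 ≤ σ) (hlam : 0 ≤ lam) :
    ∃ D₀ : ℕ, ∀ {n N : ℕ} {c g : ℕ → H}, IsQuasiGeodesicChain A σ lam k n c →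
      IsDiscreteGeodesic A N g (c 0) (c n) → ∀ i ≤ N, ∃ s ≤ n, wd A (g i) (c s) ≤ D₀ := by
  obtain ⟨D₀, hD₀⟩ := exists_le_of_le_mul_clog (a := 2 * δ + σ) (c := lam * k) hδ
    (by positivity : 0 ≤ 6 * lam)
  refine ⟨D₀, fun {n N c g} hc hg => ?_⟩
  let d (i : ℕ) : ℕ := (Finset.range (n + 1)).inf' Finset.nonempty_range_add_one
    fun s => wd A (g i) (c s)
  obtain ⟨i₀, hi₀, hmax⟩ :=
    Finset.exists_max_image (Finset.range (N + 1)) d Finset.nonempty_range_add_one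
  have hnear : ∀ i ≤ N, ∃ s ≤ n, wd A (g i) (c s) ≤ d i₀ := by
    intro i hi
    obtain ⟨s, hs, h⟩ := Finset.exists_mem_eq_inf' Finset.nonempty_range_add_one
      fun s => wd A (g i) (c s)
    exact ⟨s, Nat.lt_succ_iff.1 (Finset.mem_range.1 hs),
      h ▸ hmax i (Finset.mem_range.2 (by omega))⟩
  have hfar : ∀ s ≤ n, d i₀ ≤ wd A (g i₀) (c s) := fun s hs =>
    Finset.inf'_le _ (Finset.mem_range.2 (by omega))
  have hfarthest := hr.le_mul_clog_of_farthest hgen hδ hσ hlam hc hg hnear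
    (Nat.lt_succ_iff.1 (Finset.mem_range.1 hi₀)) hfar
  rw [show lam * (6 * (d i₀ : ℝ) + k) = 6 * lam * d i₀ + lam * k by ring] at hfarthest
  have hbound := hD₀ (d i₀) hfarthest
  intro i hi
  obtain ⟨s, hs, h⟩ := hnear i hi
  exact ⟨s, hs, h.trans hbound⟩

lemma exists_near_geodesic_of_quasiGeodesicChain (hr : RipsCondition A δ)
    (hgen : Subgroup.closure A = ⊤) (hδ : 0 ≤ δ) {σ lam k : ℝ} (hσ : 0 ≤ σ) (hlam : 0 ≤ lam)
    (hk : 0 ≤ k) :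
    ∃ D₁ : ℝ, 0 ≤ D₁ ∧ ∀ {n N : ℕ} {c g : ℕ → H}, IsQuasiGeodesicChain A σ lam k n c →
      IsDiscreteGeodesic A N g (c 0) (c n) → ∀ t ≤ n, ∃ i ≤ N, (wd A (g i) (c t) : ℝ) ≤ D₁ := by
  obtain ⟨D₀, hD₀⟩ := hr.exists_near_quasiGeodesicChain hgen hδ hσ hlam (k := k)
  refine ⟨D₀ + σ * (lam * (2 * D₀ + 1 + k)), by positivity, fun {n N c g} hc hg t ht => ?_⟩
  -- adjacent points `g i`, `g j` of the geodesic lie near `c s₁` and `c s₂` with `s₁ ≤ t ≤ s₂`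
  obtain ⟨i, j, hij, hji, hjN, ⟨s₁, hs₁, hs₁t, hd₁⟩, ⟨s₂, hs₂, hts₂, hd₂⟩⟩ :=
    exists_adjacent_of_forall_or (fun i => ∃ s ≤ n, s ≤ t ∧ wd A (g i) (c s) ≤ D₀)
      (fun i => ∃ s ≤ n, t ≤ s ∧ wd A (g i) (c s) ≤ D₀) (N := N)
      ⟨0, Nat.zero_le n, Nat.zero_le t, by simp [hg.1]⟩ ⟨n, le_rfl, ht, by simp [hg.2.1]⟩
      fun i hi => by
        obtain ⟨s, hs, hd⟩ := hD₀ hc hg i hi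
        rcases le_total s t with h | h
        exacts [Or.inl ⟨s, hs, h, hd⟩, Or.inr ⟨s, hs, h, hd⟩]
  have h₁₂ : wd A (c s₂) (c s₁) ≤ 2 * D₀ + 1 := by
    have := wd_triangle hgen (c s₂) (g j) (c s₁)
    have := wd_triangle hgen (g j) (g i) (c s₁)
    have := hg.wd_eq hij hjN
    have := wd_comm hgen (c s₂) (g j)
    have := wd_comm hgen (g j) (g i)
    omega
  have hts : (t : ℝ) - s₁ ≤ lam * (2 * D₀ + 1 + k) := by
    have : (t : ℝ) ≤ s₂ := by exact_mod_cast hts₂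
    have : (wd A (c s₂) (c s₁) : ℝ) ≤ 2 * D₀ + 1 := by exact_mod_cast h₁₂
    nlinarith [hc.2 s₂ hs₂ s₁ hs₁]
  refine ⟨i, by omega, ?_⟩
  have : (wd A (g i) (c t) : ℝ) ≤ wd A (g i) (c s₁) + wd A (c s₁) (c t) := by
    exact_mod_cast wd_triangle hgen _ _ _
  have : (wd A (g i) (c s₁) : ℝ) ≤ D₀ := by exact_mod_cast hd₁
  nlinarith [hc.1.wd_le hgen hs₁t ht]

end RipsCondition

theorem brp_of_quasiIsometricEmbedding
    (A : Set H) (hgen : Subgroup.closure A = ⊤)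
    (hhyp : IsHyperbolic A) (φ : H →* H)
    (lam k : ℝ) (hlam : 1 ≤ lam) (hk : 0 ≤ k)
    (hqie : ∀ x y : H,
      lam⁻¹ * (wd A x y : ℝ) - k ≤ (wd A (φ x) (φ y) : ℝ) ∧
      (wd A (φ x) (φ y) : ℝ) ≤ lam * (wd A x y : ℝ) + k) :
    BRP A φ := by
  obtain ⟨δ, hδ, hr⟩ : ∃ δ, 0 ≤ δ ∧ RipsCondition A δ := hhyp
  have hlam₀ : 0 < lam := by linarith
  obtain ⟨D₁, hD₁, hnear⟩ := hr.exists_near_geodesic_of_quasiGeodesicChain hgen hδ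
    (σ := lam + k) (by linarith) hlam₀.le hk
  intro p hp
  refine ⟨lam * (p + 2 * δ + 1) + k + D₁, by positivity, fun u v huv => ?_⟩
  obtain ⟨α, hα⟩ := exists_isDiscreteGeodesic hgen u v
  obtain ⟨t, ht, hαt⟩ := hr.exists_wd_le_gp hgen hα 1
  obtain ⟨g, hg⟩ := exists_isDiscreteGeodesic hgen (φ u) (φ v)
  obtain ⟨i, hi, hgi⟩ := hnear (hα.isQuasiGeodesicChain_comp hlam₀ hqie)
    (by simpa [hα.1, hα.2.1] using hg) t ht
  have htri : (wd A 1 (g i) : ℝ) ≤ wd A 1 (φ (α t)) + wd A (φ (α t)) (g i) := by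
    exact_mod_cast wd_triangle hgen _ _ _
  have hφ := (hqie 1 (α t)).2
  rw [map_one] at hφ
  rw [Function.comp_apply, wd_comm hgen] at hgi
  calc gp A 1 (φ u) (φ v) ≤ wd A 1 (g i) := gp_le_wd_of_isDiscreteGeodesic hgen hg 1 hi
    _ ≤ lam * wd A 1 (α t) + k + D₁ := by linarith
    _ ≤ lam * (p + 2 * δ + 1) + k + D₁ := by gcongr; linarith

end Paper
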